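/- Let α ∈ (0,1), β ∈ [0,1), let V : ℕ → ℝ be bounded, and let s : ℕ → ℝ be nondecreasing with 0 ≤ s n ≤ 1 for all n. Assume for every m ∈ ℕ that V m ≥ (1 + α·β − α) · s m + α · V (m+1) − α·β. Then for every N ∈ ℕ, s N ≤ (V 0 · α^{−N} · (1 − α) + α·β·α^{−N}) / (1 + α·β − α). -/
import Mathlib


theorem discounted_upper_bound_general (α β : ℝ) (hα : α ∈ Set.Ioo (0:ℝ) 1)
    (hβ : β ∈ Set.Ico (0:ℝ) 1) (V s : ℕ → ℝ)
    (hV : ∃ C, ∀ n, |V n| ≤ C) (hmono : Monotone s)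
    (h0 : ∀ n, 0 ≤ s n) (h1 : ∀ n, s n ≤ 1)
    (h : ∀ m : ℕ, V m ≥ (1 + α * β - α) * s m + α * V (m + 1) - α * β) :
    ∀ N : ℕ, s N ≤ (V 0 * α ^ (-(N : ℤ)) * (1 - α) + α * β * α ^ (-(N : ℤ))) /
      (1 + α * β - α) := by
  obtain ⟨hα0, hα1⟩ := hα
  obtain ⟨hβ0, hβ1⟩ := hβ
  obtain ⟨C, hC⟩ := hV
  have hC0 : 0 ≤ C := (abs_nonneg _).trans (hC 0)
  set c : ℝ := 1 + α * β - α with hc_def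
  have hc : 0 < c := by nlinarith
  have h1a : (0:ℝ) < 1 - α := by linarith
  intro N
  -- unrolled inequality
  have unroll : ∀ k : ℕ, V 0 ≥
      (∑ i ∈ Finset.range k, α ^ i * (c * s i))
        - α * β * (∑ i ∈ Finset.range k, α ^ i) + α ^ k * V k := by
    intro k
    induction k with
    | zero => simp
    | succ k ih =>
      have hk := h k
      have hpow : (0:ℝ) ≤ α ^ k := le_of_lt (pow_pos hα0 k)
      have : α ^ k * V k ≥ α ^ k * (c * s k) - α * β * α ^ k
          + α ^ (k + 1) * V (k + 1) := by
        have := mul_le_mul_of_nonneg_left hk hpow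
        ring_nf
        ring_nf at this
        nlinarith [this]
      rw [Finset.sum_range_succ, Finset.sum_range_succ]
      nlinarith [ih, this]
  -- key inequality : c * s N * α ^ N ≤ V 0 * (1 - α) + α * β
  have key : c * s N * α ^ N ≤ V 0 * (1 - α) + α * β := by
    apply le_of_forall_pos_le_add
    intro ε hε
    have hMc0 : (0:ℝ) < c + C + 1 := by positivity
    obtain ⟨k, hk⟩ := exists_pow_lt_of_lt_one (div_pos hε hMc0) hα1
    set p := N + k with hp_def
    have hNle : N ≤ p := Nat.le_add_right N k
    have hp : (0:ℝ) < α ^ p := pow_pos hα0 p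
    have hu := (unroll p).le
    -- geometric sum identities
    have hE1 : (∑ i ∈ Finset.range p, α ^ i) * (1 - α) = 1 - α ^ p := by
      linear_combination (-1 : ℝ) * geom_sum_mul α p
    have hE2 : (∑ i ∈ Finset.Ico N p, α ^ i) * (1 - α) = α ^ N - α ^ p := by
      rw [Finset.sum_Ico_eq_sub _ hNle]
      linear_combination geom_sum_mul α N - geom_sum_mul α p
    -- lower bound the main sum
    have hS : c * s N * (∑ i ∈ Finset.Ico N p, α ^ i)
        ≤ ∑ i ∈ Finset.range p, α ^ i * (c * s i) := by
      rw [Finset.mul_sum]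
      refine le_trans (Finset.sum_le_sum ?_)
        (Finset.sum_le_sum_of_subset_of_nonneg ?_ ?_)
      · intro i hi
        have hNi : N ≤ i := (Finset.mem_Ico.mp hi).1
        have hsi := hmono hNi
        have hpow : (0:ℝ) ≤ α ^ i := (pow_pos hα0 i).le
        have h2 : c * s N ≤ c * s i := mul_le_mul_of_nonneg_left hsi hc.le
        calc c * s N * α ^ i = α ^ i * (c * s N) := by ring
          _ ≤ α ^ i * (c * s i) := mul_le_mul_of_nonneg_left h2 hpow
      · intro i hi
        exact Finset.mem_range.mpr (Finset.mem_Ico.mp hi).2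
      · intro i _ _
        exact mul_nonneg (pow_pos hα0 i).le (mul_nonneg hc.le (h0 i))
    have hVb : -C ≤ V p := (abs_le.mp (hC p)).1
    -- multiply the unrolled inequality by (1 - α)
    have hu' := mul_le_mul_of_nonneg_right hu h1a.le
    have e1 : ((∑ i ∈ Finset.range p, α ^ i * (c * s i))
          - α * β * (∑ i ∈ Finset.range p, α ^ i) + α ^ p * V p) * (1 - α)
        = (∑ i ∈ Finset.range p, α ^ i * (c * s i)) * (1 - α)
          - α * β * ((∑ i ∈ Finset.range p, α ^ i) * (1 - α))
          + V p * (α ^ p * (1 - α)) := by ring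
    rw [hE1] at e1
    have hS' := mul_le_mul_of_nonneg_right hS h1a.le
    have e2 : c * s N * (∑ i ∈ Finset.Ico N p, α ^ i) * (1 - α)
        = c * s N * ((∑ i ∈ Finset.Ico N p, α ^ i) * (1 - α)) := by ring
    rw [hE2] at e2
    rw [e2] at hS'
    have hV' : -C * (α ^ p * (1 - α)) ≤ V p * (α ^ p * (1 - α)) :=
      mul_le_mul_of_nonneg_right hVb (by positivity)
    have hA : V 0 * (1 - α) ≥ c * s N * (α ^ N - α ^ p)
        - α * β * (1 - α ^ p) + (-C) * (α ^ p * (1 - α)) := by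
      rw [e1] at hu'
      linarith [hS', hV', hu']
    -- error term bounds
    have hcs : c * s N ≤ c := by
      have := mul_le_mul_of_nonneg_left (h1 N) hc.le
      linarith
    have f2 : c * s N * α ^ p ≤ c * α ^ p :=
      mul_le_mul_of_nonneg_right hcs hp.le
    have f3 : (0:ℝ) ≤ α * β * α ^ p :=
      mul_nonneg (mul_nonneg hα0.le hβ0) hp.le
    have f4 : (0:ℝ) ≤ C * α ^ p * α :=
      mul_nonneg (mul_nonneg hC0 hp.le) hα0.le
    have hαple : α ^ p ≤ α ^ k :=
      pow_le_pow_of_le_one hα0.le hα1.le (Nat.le_add_left k N)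
    have f5 : (c + C + 1) * α ^ p ≤ (c + C + 1) * α ^ k :=
      mul_le_mul_of_nonneg_left hαple hMc0.le
    have f6 : α ^ k * (c + C + 1) < ε := (lt_div_iff₀ hMc0).mp hk
    nlinarith [hA, f2, f3, f4, f5, f6, hp.le, hC0]
  -- conclude
  have hpowN : (0:ℝ) < α ^ N := pow_pos hα0 N
  have hz : α ^ (-(N : ℤ)) = (α ^ N)⁻¹ := by
    rw [zpow_neg, zpow_natCast]
  rw [hz, le_div_iff₀ hc]
  have h6 := mul_le_mul_of_nonneg_right key (inv_nonneg.mpr hpowN.le)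
  have h7 : c * s N * α ^ N * (α ^ N)⁻¹ = c * s N := by
    field_simp
  rw [h7] at h6
  have h8 : (V 0 * (1 - α) + α * β) * (α ^ N)⁻¹
      = V 0 * (α ^ N)⁻¹ * (1 - α) + α * β * (α ^ N)⁻¹ := by ring
  linarith [h6, h8.le, h8.ge]
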